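/- arXiv:1408.0442 — 7 statements merged into one kernel-verified Lean document; each statement's English description precedes it below -/
import Mathlib

section
/- For integers p, t with p > t ≥ 0, the infinite series Σ_{ℓ=1}^{∞} 1/((p+ℓ)·C(p+ℓ-1, t+ℓ-1)) converges and equals 1/(p·C(p-1,t)). -/
/-!
Pascal's rule `(n + 1) C(n, k) = (k + 1) C(n + 1, k + 1)` makes the series telescope:
with `f l = 1 / ((p - t) C(p + l, t + l))` the `l`-th term is `f l - f (l + 1)`, and
`f l → 0` because `C(p + l, t + l) ≥ t + l + 1`. The sum is therefore `f 0`, which equals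
`1 / (p C(p - 1, t))` since `p C(p - 1, t) = (p - t) C(p, t)`.
-/

open Filter Topology

theorem Nat.succ_le_choose_of_lt {n k : ℕ} (h : k < n) : k + 1 ≤ n.choose k := by
  calc k + 1 = (k + 1).choose k := (Nat.choose_succ_self_right k).symm
    _ ≤ n.choose k := Nat.choose_le_choose k h

theorem tendsto_choose_add_add_atTop {n k : ℕ} (h : k < n) :
    Tendsto (fun l => (n + l).choose (k + l)) atTop atTop :=
  tendsto_atTop_mono (fun l => (show l ≤ k + l + 1 by omega).trans
    (Nat.succ_le_choose_of_lt (by omega))) tendsto_id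

-- Nonnegative terms, so that convergence of the partial sums suffices.
theorem hasSum_sub_succ_of_antitone {f : ℕ → ℝ} {a : ℝ} (hf : Antitone f)
    (hlim : Tendsto f atTop (𝓝 a)) : HasSum (fun n => f n - f (n + 1)) (f 0 - a) := by
  rw [hasSum_iff_tendsto_nat_of_nonneg fun n => sub_nonneg.2 (hf n.le_succ)]
  simpa only [Finset.sum_range_sub'] using tendsto_const_nhds.sub hlim

theorem one_div_succ_mul_choose_eq_sub {n k : ℕ} (h : k < n) :
    (1 : ℝ) / ((n + 1) * n.choose k) =
      1 / ((n - k) * n.choose k) - 1 / ((n - k) * (n + 1).choose (k + 1)) := by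
  have hpas : ((n + 1 : ℕ) : ℝ) * n.choose k = (n + 1).choose (k + 1) * (k + 1 : ℕ) := by
    exact_mod_cast Nat.add_one_mul_choose_eq n k
  have hnk : (0 : ℝ) < n - k := sub_pos.2 (by exact_mod_cast h)
  have hc : (0 : ℝ) < n.choose k := by exact_mod_cast Nat.choose_pos h.le
  have hc' : (0 : ℝ) < (n + 1).choose (k + 1) := by exact_mod_cast Nat.choose_pos (by omega)
  push_cast at hpas
  field_simp
  linear_combination hpas

theorem Nat.mul_choose_pred_eq {p t : ℕ} (hp : 0 < p) :
    p * (p - 1).choose t = (p - t) * p.choose t := by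
  have := Nat.choose_mul_succ_eq (p - 1) t
  rw [Nat.sub_add_cancel hp] at this
  rw [mul_comm, this, mul_comm]

theorem stmt2 (p t : ℕ) (hpt : t < p) :
    HasSum (fun l : ℕ => (1:ℝ)/((p+l+1) * (p+l).choose (t+l)))
      (1/(p * (p-1).choose t)) := by
  set f : ℕ → ℝ := fun l => 1 / ((p - t) * (p + l).choose (t + l)) with hf
  have hterm : ∀ l : ℕ, (1 : ℝ) / ((p + l + 1) * (p + l).choose (t + l)) = f l - f (l + 1) := by
    intro l
    have := one_div_succ_mul_choose_eq_sub (n := p + l) (k := t + l) (by omega)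
    push_cast at this
    simp only [hf, this, ← add_assoc]
    ring_nf
  have hlim : Tendsto f atTop (𝓝 0) := by
    have hpt' : (0 : ℝ) < p - t := sub_pos.2 (by exact_mod_cast hpt)
    have hchoose := tendsto_natCast_atTop_iff (R := ℝ) |>.2 (tendsto_choose_add_add_atTop hpt)
    simpa only [hf, one_div, Pi.inv_def] using (hchoose.const_mul_atTop hpt').inv_tendsto_atTop
  have hanti : Antitone f :=
    antitone_nat_of_succ_le fun l => sub_nonneg.1 (hterm l ▸ by positivity)
  have hf0 : f 0 = 1 / (p * (p - 1).choose t) := by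
    have : ((p * (p - 1).choose t : ℕ) : ℝ) = ((p - t : ℕ) * p.choose t : ℕ) :=
      congrArg _ (Nat.mul_choose_pred_eq (by omega))
    push_cast [Nat.cast_sub hpt.le] at this
    simp only [hf, add_zero, this]
  simpa only [hterm, hf0, sub_zero] using hasSum_sub_succ_of_antitone hanti hlim
end

section
/- Let w₁ > w₂ > ⋯ > wₙ > 0 be a super-increasing sequence, i.e., wᵢ > Σ_{j=i+1}^{n} wⱼ for all i. For subsets C₁, C₂ of {1,…,n}, define β(C) = Σ_{i∈C} 2^{n−i} and w(C) = Σ_{i∈C} wᵢ. Then β(C₁) < β(C₂) if and only if w(C₁) < w(C₂). -/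
/-!
Call `f` super-increasing when every value exceeds the sum of `f` over any set of smaller
indices. Then comparing `∑ i ∈ s, f i` with `∑ i ∈ t, f i` amounts to looking at the largest
index in which `s` and `t` differ, i.e. to the colexicographic order of `s` and `t`. Both
`i ↦ 2 ^ i` and, after reversing the indices with `Fin.rev`, the weights `w` are
super-increasing, so both comparisons in the theorem are the same colex comparison.
-/

open Finset Colex

namespace Finset

variable {ι α : Type*} [LinearOrder ι] [AddCommMonoid α] [PartialOrder α]

def IsSuperIncreasing (f : ι → α) : Prop :=
  ∀ i (s : Finset ι), (∀ j ∈ s, j < i) → ∑ j ∈ s, f j < f i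

theorem IsSuperIncreasing.pos {f : ι → α} (hf : IsSuperIncreasing f) (i : ι) : 0 < f i := by
  simpa using hf i ∅

theorem IsSuperIncreasing.sum_ofColex_strictMono [IsOrderedCancelAddMonoid α] {f : ι → α}
    (hf : IsSuperIncreasing f) : StrictMono fun s : Colex (Finset ι) ↦ ∑ i ∈ ofColex s, f i := by
  intro s t hst
  obtain ⟨a, hat, has, ha⟩ := Colex.lt_iff_exists_forall_lt.1 hst
  rw [← sum_sdiff_lt_sum_sdiff]
  exact (hf a _ fun b hb ↦ ha b (mem_sdiff.1 hb).1 (mem_sdiff.1 hb).2).trans_le <|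
    single_le_sum (fun i _ ↦ (hf.pos i).le) (mem_sdiff.2 ⟨hat, has⟩)

theorem IsSuperIncreasing.sum_lt_sum_iff [IsOrderedCancelAddMonoid α] {f : ι → α}
    (hf : IsSuperIncreasing f) {s t : Finset ι} :
    ∑ i ∈ s, f i < ∑ i ∈ t, f i ↔ toColex s < toColex t :=
  hf.sum_ofColex_strictMono.lt_iff_lt

end Finset

namespace Fin

variable {α : Type*} [AddCommMonoid α] [PartialOrder α] [IsOrderedCancelAddMonoid α]

theorem isSuperIncreasing_pow_val {n m : ℕ} (hm : 2 ≤ m) :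
    IsSuperIncreasing fun i : Fin n ↦ m ^ (i : ℕ) := by
  intro i s hs
  simpa [sum_map] using Nat.geomSum_lt hm (s := s.map valEmbedding) (by simpa using hs)

theorem isSuperIncreasing_comp_rev {n : ℕ} {w : Fin n → α} (hpos : ∀ i, 0 < w i)
    (hsi : ∀ i : Fin n, (∑ j ∈ univ.filter (fun j => i < j), w j) < w i) :
    IsSuperIncreasing (w ∘ rev) := by
  intro i s hs
  change ∑ j ∈ s, w (revPerm.toEmbedding j) < w i.rev
  rw [← sum_map s revPerm.toEmbedding w]
  refine (sum_le_sum_of_subset_of_nonneg ?_ fun j _ _ ↦ (hpos j).le).trans_lt (hsi i.rev)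
  intro j hj
  obtain ⟨k, hk, rfl⟩ := mem_map.1 hj
  simpa [rev_lt_rev] using hs k hk

theorem sum_two_pow_lt_sum_iff_toColex_map_rev {n : ℕ} (C₁ C₂ : Finset (Fin n)) :
    (∑ i ∈ C₁, 2 ^ (n - 1 - (i : ℕ)) : ℕ) < ∑ i ∈ C₂, 2 ^ (n - 1 - (i : ℕ)) ↔
      toColex (C₁.map revPerm.toEmbedding) < toColex (C₂.map revPerm.toEmbedding) := by
  have reindex (C : Finset (Fin n)) :
      ∑ i ∈ C, 2 ^ (n - 1 - (i : ℕ)) = ∑ i ∈ C.map revPerm.toEmbedding, 2 ^ (i : ℕ) := by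
    rw [sum_map]
    refine sum_congr rfl fun i _ ↦ ?_
    rw [Equiv.coe_toEmbedding, revPerm_apply, val_rev, Nat.sub_sub, Nat.add_comm 1]
  rw [reindex, reindex, (isSuperIncreasing_pow_val le_rfl).sum_lt_sum_iff]

theorem sum_lt_sum_iff_toColex_map_rev {n : ℕ} {w : Fin n → α} (hpos : ∀ i, 0 < w i)
    (hsi : ∀ i : Fin n, (∑ j ∈ univ.filter (fun j => i < j), w j) < w i)
    (C₁ C₂ : Finset (Fin n)) :
    ∑ i ∈ C₁, w i < ∑ i ∈ C₂, w i ↔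
      toColex (C₁.map revPerm.toEmbedding) < toColex (C₂.map revPerm.toEmbedding) := by
  have reindex (C : Finset (Fin n)) :
      ∑ i ∈ C, w i = ∑ i ∈ C.map revPerm.toEmbedding, (w ∘ rev) i := by
    simp [sum_map]
  rw [reindex, reindex, (isSuperIncreasing_comp_rev hpos hsi).sum_lt_sum_iff]

end Fin

theorem stmt3_general (n : ℕ) (w : Fin n → ℝ) (hpos : ∀ i, 0 < w i)
    (hsi : ∀ i : Fin n, (∑ j ∈ Finset.univ.filter (fun j => i < j), w j) < w i)
    (C₁ C₂ : Finset (Fin n)) :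
    (∑ i ∈ C₁, 2^(n - 1 - (i:ℕ)) : ℕ) < (∑ i ∈ C₂, 2^(n - 1 - (i:ℕ)))
      ↔ (∑ i ∈ C₁, w i) < ∑ i ∈ C₂, w i := by
  rw [Fin.sum_two_pow_lt_sum_iff_toColex_map_rev, Fin.sum_lt_sum_iff_toColex_map_rev hpos hsi]

/-- Lemma: for a super-increasing sequence (strictly decreasing, positive),
`β(C₁) < β(C₂)` iff `w(C₁) < w(C₂)`, where `β(C) = ∑_{i ∈ C} 2^(n-i)`
(agent `i : Fin n` corresponds to the paper's agent `i+1`). -/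
theorem stmt3 (n : ℕ) (w : Fin n → ℝ) (hpos : ∀ i, 0 < w i) (hdec : StrictAnti w)
    (hsi : ∀ i : Fin n, (∑ j ∈ Finset.univ.filter (fun j => i < j), w j) < w i)
    (C₁ C₂ : Finset (Fin n)) :
    (∑ i ∈ C₁, 2^(n - 1 - (i:ℕ)) : ℕ) < (∑ i ∈ C₂, 2^(n - 1 - (i:ℕ)))
      ↔ (∑ i ∈ C₁, w i) < ∑ i ∈ C₂, w i :=
  stmt3_general n w hpos hsi C₁ C₂
end

section
/- Let w₁ > ⋯ > wₙ > 0 be a super-increasing sequence with wᵢ > Σ_{j>i} wⱼ. For every quota q ∈ (0, w({1,…,n})], there exists a unique non-empty subset P ⊆ {1,…,n} such that q ∈ (w(P⁻), w(P)], where P⁻ is the unique subset with β(P⁻) = β(P) − 1 and β(C) = Σ_{i∈C} 2^{n−i}. Consequently the intervals (w(P⁻), w(P)], ranging over non-empty P, partition (0, w(N)]. -/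
/-!
Order the subsets `C` by their binary code `β(C)`. Because the weights are super-increasing,
`w(A) < w(B)` holds exactly when the first index at which `A` and `B` differ lies in `B`, and the
same is true of the weights `2^(n-1-i)` defining `β`; hence `w` is strictly increasing along the
chain `∅ = C₀, C₁, …, C_{2ⁿ-1} = N` of all subsets listed by their code. The intervals
`(w(C_{k-1}), w(C_k)]` therefore partition `(0, w(N)]`, and `P` is the first `C_k` with `q ≤ w(C_k)`.
-/

open Finset

def SuperIncreasing {ι M : Type*} [Fintype ι] [LinearOrder ι] [AddCommMonoid M] [LT M]
    (f : ι → M) : Prop :=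
  ∀ i, ∑ j ∈ univ.filter (fun j => i < j), f j < f i

theorem Finset.exists_mem_symmDiff_forall_lt_iff {ι : Type*} [LinearOrder ι] {P Q : Finset ι}
    (h : P ≠ Q) : ∃ i ∈ symmDiff P Q, ∀ j < i, (j ∈ P ↔ j ∈ Q) := by
  refine ⟨_, min'_mem _ (symmDiff_nonempty.2 h), fun j hj => ?_⟩
  have : j ∉ symmDiff P Q := fun hmem => (min'_le _ j hmem).not_gt hj
  rw [mem_symmDiff] at this
  tauto

namespace SuperIncreasing

variable {ι M N : Type*} [Fintype ι] [LinearOrder ι]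
  [AddCommMonoid M] [PartialOrder M] [IsOrderedCancelAddMonoid M]
  [AddCommMonoid N] [PartialOrder N] [IsOrderedCancelAddMonoid N] {f : ι → M}

theorem sum_lt_sum (hf : SuperIncreasing f) (hf0 : ∀ i, 0 ≤ f i) {P Q : Finset ι} {i : ι}
    (hiP : i ∉ P) (hiQ : i ∈ Q) (hPQ : ∀ j < i, (j ∈ P ↔ j ∈ Q)) :
    ∑ j ∈ P, f j < ∑ j ∈ Q, f j := by
  have hlow : P.filter (· < i) = Q.filter (· < i) := by
    ext j
    simp only [mem_filter]
    grind
  have hhighP : ∑ j ∈ P.filter (¬ · < i), f j ≤ ∑ j ∈ univ.filter (fun j => i < j), f j := by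
    refine sum_le_sum_of_subset_of_nonneg (fun j hj => ?_) (fun j _ _ => hf0 j)
    simp only [mem_filter, mem_univ, true_and, not_lt] at hj ⊢
    exact hj.2.lt_of_ne (by rintro rfl; exact hiP hj.1)
  have hhighQ : f i ≤ ∑ j ∈ Q.filter (¬ · < i), f j :=
    single_le_sum (fun j _ => hf0 j) (by simp [hiQ])
  rw [← sum_filter_add_sum_filter_not P (· < i), ← sum_filter_add_sum_filter_not Q (· < i), hlow]
  gcongr
  exact (hhighP.trans_lt (hf i)).trans_le hhighQ

theorem sum_injective (hf : SuperIncreasing f) (hf0 : ∀ i, 0 ≤ f i) :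
    Function.Injective fun P : Finset ι => ∑ j ∈ P, f j := by
  intro P Q hPQ
  by_contra hne
  obtain ⟨i, hi, hlt⟩ := exists_mem_symmDiff_forall_lt_iff hne
  rcases mem_symmDiff.1 hi with ⟨hiP, hiQ⟩ | ⟨hiQ, hiP⟩
  · exact (hf.sum_lt_sum hf0 hiQ hiP fun j hj => (hlt j hj).symm).ne' hPQ
  · exact (hf.sum_lt_sum hf0 hiP hiQ hlt).ne hPQ

/-- Super-increasing weights all induce the same order on subsets. -/
theorem sum_le_sum_of_sum_le (hf : SuperIncreasing f) (hf0 : ∀ i, 0 ≤ f i) {g : ι → N}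
    (hg : SuperIncreasing g) (hg0 : ∀ i, 0 ≤ g i) {P Q : Finset ι}
    (h : ∑ j ∈ P, g j ≤ ∑ j ∈ Q, g j) : ∑ j ∈ P, f j ≤ ∑ j ∈ Q, f j := by
  by_cases hPQ : P = Q
  · rw [hPQ]
  obtain ⟨i, hi, hlt⟩ := exists_mem_symmDiff_forall_lt_iff hPQ
  rcases mem_symmDiff.1 hi with ⟨hiP, hiQ⟩ | ⟨hiQ, hiP⟩
  · exact absurd h (hg.sum_lt_sum hg0 hiQ hiP fun j hj => (hlt j hj).symm).not_ge
  · exact (hf.sum_lt_sum hf0 hiP hiQ hlt).le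

end SuperIncreasing

section BinaryCode

variable {n : ℕ}

/-- The code `β(P)`: index `i` of `Fin n` is the binary digit of weight `2^(n-1-i)`. -/
def binaryCode (P : Finset (Fin n)) : ℕ := ∑ i ∈ P, 2 ^ (n - 1 - (i : ℕ))

theorem sum_two_pow_sub_lt (s : Finset (Fin n)) {m : ℕ} (h : ∀ i ∈ s, n - 1 - (i : ℕ) < m) :
    ∑ i ∈ s, 2 ^ (n - 1 - (i : ℕ)) < 2 ^ m := by
  have hinj : Set.InjOn (fun i : Fin n => n - 1 - (i : ℕ)) s := fun i _ j _ hij => by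
    have := i.2; have := j.2
    exact Fin.ext (by simp only at hij; omega)
  rw [← sum_image hinj]
  exact Nat.geomSum_lt le_rfl (by simpa using h)

theorem binaryCode_lt_two_pow (P : Finset (Fin n)) : binaryCode P < 2 ^ n :=
  sum_two_pow_sub_lt P fun i _ => by have := i.2; omega

theorem superIncreasing_two_pow : SuperIncreasing fun i : Fin n => 2 ^ (n - 1 - (i : ℕ)) :=
  fun i => sum_two_pow_sub_lt _ fun j hj => by
    have := j.2
    have : (i : ℕ) < j := by simpa using hj
    omega

theorem binaryCode_injective : Function.Injective (binaryCode (n := n)) :=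
  superIncreasing_two_pow.sum_injective fun _ => Nat.zero_le _

/-- Injective into `[0, 2ⁿ)` from a set of size `2ⁿ`, hence onto. -/
theorem binaryCode_surjective {k : ℕ} (hk : k < 2 ^ n) : ∃ P : Finset (Fin n), binaryCode P = k := by
  let e : Finset (Fin n) → Fin (2 ^ n) := fun P => ⟨binaryCode P, binaryCode_lt_two_pow P⟩
  have he : Function.Bijective e := (Fintype.bijective_iff_injective_and_card e).2
    ⟨fun P Q h => binaryCode_injective (congrArg Fin.val h), by simp⟩
  obtain ⟨P, hP⟩ := he.2 ⟨k, hk⟩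
  exact ⟨P, congrArg Fin.val hP⟩

theorem SuperIncreasing.sum_le_sum_of_binaryCode_le {w : Fin n → ℝ} (hw : SuperIncreasing w)
    (hw0 : ∀ i, 0 ≤ w i) {P Q : Finset (Fin n)} (h : binaryCode P ≤ binaryCode Q) :
    ∑ i ∈ P, w i ≤ ∑ i ∈ Q, w i :=
  hw.sum_le_sum_of_sum_le hw0 superIncreasing_two_pow (fun _ => Nat.zero_le _) h

end BinaryCode

theorem stmt5_general (n : ℕ) (w : Fin n → ℝ) (hpos : ∀ i, 0 < w i)
    (hsi : ∀ i : Fin n, (∑ j ∈ Finset.univ.filter (fun j => i < j), w j) < w i)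
    (q : ℝ) (hq1 : 0 < q) (hq2 : q ≤ ∑ i : Fin n, w i) :
    ∃! P : Finset (Fin n), P.Nonempty ∧ ∃ Pm : Finset (Fin n),
      (∑ i ∈ Pm, 2^(n - 1 - (i:ℕ)) : ℕ) + 1 = (∑ i ∈ P, 2^(n - 1 - (i:ℕ))) ∧
      (∑ i ∈ Pm, w i) < q ∧ q ≤ ∑ i ∈ P, w i := by
  have hmono {A B : Finset (Fin n)} : binaryCode A ≤ binaryCode B → ∑ i ∈ A, w i ≤ ∑ i ∈ B, w i :=
    SuperIncreasing.sum_le_sum_of_binaryCode_le hsi fun i => (hpos i).le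
  obtain ⟨P, hPq, hPmin⟩ := exists_min_image (univ.filter fun C => q ≤ ∑ i ∈ C, w i) binaryCode
    ⟨univ, by simpa using hq2⟩
  simp only [mem_filter, mem_univ, true_and] at hPq hPmin
  have hPne : P ≠ ∅ := by rintro rfl; rw [sum_empty] at hPq; linarith
  have hP0 : binaryCode P ≠ 0 := fun h => hPne (binaryCode_injective (h.trans (sum_empty).symm))
  obtain ⟨Pm, hPm⟩ := binaryCode_surjective ((Nat.sub_le _ 1).trans_lt (binaryCode_lt_two_pow P))
  have hPmq : ∑ i ∈ Pm, w i < q := lt_of_not_ge fun h => by have := hPmin Pm h; omega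
  refine ⟨P, ⟨nonempty_of_ne_empty hPne, Pm, (by omega : binaryCode Pm + 1 = binaryCode P), hPmq,
    hPq⟩, ?_⟩
  rintro P' ⟨-, Pm', hP', hPm'q, hqP'⟩
  change binaryCode Pm' + 1 = binaryCode P' at hP'
  refine binaryCode_injective (le_antisymm (not_lt.1 fun h => ?_) (not_lt.1 fun h => ?_))
  · linarith [hmono (A := P) (B := Pm') (by omega)]
  · linarith [hmono (A := P') (B := Pm) (by omega)]

/-- For super-increasing weights and any quota `q ∈ (0, w(N)]`, there is a unique
nonempty subset `P` such that `q ∈ (w(P⁻), w(P)]`, where `P⁻` is the unique subset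
with `β(P⁻) = β(P) - 1`. -/
theorem stmt5 (n : ℕ) (w : Fin n → ℝ) (hpos : ∀ i, 0 < w i) (hdec : StrictAnti w)
    (hsi : ∀ i : Fin n, (∑ j ∈ Finset.univ.filter (fun j => i < j), w j) < w i)
    (q : ℝ) (hq1 : 0 < q) (hq2 : q ≤ ∑ i : Fin n, w i) :
    ∃! P : Finset (Fin n), P.Nonempty ∧ ∃ Pm : Finset (Fin n),
      (∑ i ∈ Pm, 2^(n - 1 - (i:ℕ)) : ℕ) + 1 = (∑ i ∈ P, 2^(n - 1 - (i:ℕ))) ∧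
      (∑ i ∈ Pm, w i) < q ∧ q ≤ ∑ i ∈ P, w i :=
  stmt5_general n w hpos hsi q hq1 hq2
end

section
/- In a weighted voting game, if wᵢ ≤ wⱼ then φᵢ ≤ φⱼ: the Shapley value is monotone in the weights. -/
/-!
Transposing `i` and `j` is a bijection on orderings. If `P` is the set of predecessors of `j`
in `σ`, then the predecessors of `i` in `σ * swap i j` form `swap i j '' P`. Since `j ∉ P` and
`w i ≤ w j`, the coalition `swap i j '' P` weighs at least as much as `P`, while
`insert i (swap i j '' P) = swap i j '' (insert j P)` weighs at most as much as `insert j P`.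
Winning being monotone in the weight, the marginal contribution of `i` in `σ * swap i j` is at
most that of `j` in `σ`; summing over `σ` gives the claim.
-/

/-- The Shapley value of agent `i` in the weighted voting game `(w, q)` on `Fin n`. -/
noncomputable def shapley (n : ℕ) (w : Fin n → ℝ) (q : ℝ) (i : Fin n) : ℝ :=
  (∑ σ : Equiv.Perm (Fin n),
      ((if q ≤ ∑ j ∈ insert i (Finset.univ.filter fun j => σ j < σ i), w j then (1:ℝ) else 0)
        - (if q ≤ ∑ j ∈ Finset.univ.filter (fun j => σ j < σ i), w j then (1:ℝ) else 0)))
    / (Nat.factorial n)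

open Finset Equiv

theorem univ_filter_comp_equiv {ι κ : Type*} [Fintype ι] [Fintype κ] (τ : ι ≃ κ)
    (p : κ → Prop) [DecidablePred p] :
    univ.filter (fun k => p (τ k)) = (univ.filter p).map τ.symm.toEmbedding := by
  rw [map_filter, map_univ_equiv]
  rfl

namespace WeightedVoting

variable {ι : Type*} (w : ι → ℝ) (q : ℝ)

noncomputable def wins (S : Finset ι) : ℝ :=
  if q ≤ ∑ k ∈ S, w k then 1 else 0

variable {w q} in
theorem wins_mono {S T : Finset ι} (h : ∑ k ∈ S, w k ≤ ∑ k ∈ T, w k) :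
    wins w q S ≤ wins w q T := by
  unfold wins
  split_ifs <;> linarith

variable [DecidableEq ι]

noncomputable def marginal (i : ι) (S : Finset ι) : ℝ :=
  wins w q (insert i S) - wins w q S

variable {w q}

theorem sum_comp_swap_of_notMem {S : Finset ι} {i j : ι} (hj : j ∉ S) :
    ∑ k ∈ S, w (swap i j k) = ∑ k ∈ S, w k + if i ∈ S then w j - w i else 0 := by
  have hfix : ∀ k ∈ S, k ≠ i → w (swap i j k) = w k := fun k hk hki =>
    congrArg w (swap_apply_of_ne_of_ne hki (ne_of_mem_of_not_mem hk hj))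
  split_ifs with hi
  · rw [← add_sum_erase S _ hi, ← add_sum_erase S _ hi, swap_apply_left,
      sum_congr rfl fun k hk => hfix k (mem_of_mem_erase hk) (ne_of_mem_erase hk)]
    ring
  · rw [sum_congr rfl fun k hk => hfix k hk (ne_of_mem_of_not_mem hk hi), add_zero]

theorem marginal_map_swap_le {S : Finset ι} {i j : ι} (hw : w i ≤ w j) (hj : j ∉ S) :
    marginal w q i (S.map (swap i j).toEmbedding) ≤ marginal w q j S := by
  have hinsert : insert i (S.map (swap i j).toEmbedding) =
      (insert j S).map (swap i j).toEmbedding := by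
    rw [map_insert, toEmbedding_apply, swap_apply_right]
  have hshift := sum_comp_swap_of_notMem (w := w) (i := i) hj
  have hgain : wins w q (insert i (S.map (swap i j).toEmbedding)) ≤ wins w q (insert j S) := by
    refine wins_mono ?_
    rw [hinsert, sum_map, sum_insert hj, sum_insert hj]
    simp only [toEmbedding_apply, swap_apply_right, hshift]
    split_ifs <;> linarith
  have hloss : wins w q S ≤ wins w q (S.map (swap i j).toEmbedding) := by
    refine wins_mono ?_
    simp only [sum_map, toEmbedding_apply, hshift]
    split_ifs <;> linarith
  unfold marginal
  linarith

end WeightedVoting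

open WeightedVoting

theorem shapley_eq_sum_marginal (n : ℕ) (w : Fin n → ℝ) (q : ℝ) (i : Fin n) :
    shapley n w q i =
      (∑ σ : Perm (Fin n), marginal w q i (univ.filter fun k => σ k < σ i)) / n.factorial :=
  rfl

theorem stmt9_general (n : ℕ) (w : Fin n → ℝ) (q : ℝ)
    (i j : Fin n) (hw : w i ≤ w j) :
    shapley n w q i ≤ shapley n w q j := by
  rw [shapley_eq_sum_marginal, shapley_eq_sum_marginal]
  gcongr ?_ / _
  rw [← Equiv.sum_comp (Equiv.mulRight (swap i j))
    (fun σ : Perm (Fin n) => marginal w q i (univ.filter fun k => σ k < σ i))]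
  refine sum_le_sum fun σ _ => ?_
  have hpred :
      (univ.filter fun k => Equiv.mulRight (swap i j) σ k < Equiv.mulRight (swap i j) σ i) =
        (univ.filter fun k => σ k < σ j).map (swap i j).toEmbedding := by
    simpa [swap_apply_left] using univ_filter_comp_equiv (swap i j) (fun k => σ k < σ j)
  rw [hpred]
  exact marginal_map_swap_le hw fun hj => lt_irrefl _ (mem_filter.1 hj).2

/-- Monotonicity of the Shapley value in the weights: `wᵢ ≤ wⱼ` implies `φᵢ ≤ φⱼ`. -/
theorem stmt9 (n : ℕ) (w : Fin n → ℝ) (hpos : ∀ i, 0 < w i) (q : ℝ)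
    (i j : Fin n) (hw : w i ≤ w j) :
    shapley n w q i ≤ shapley n w q j :=
  stmt9_general n w q i j hw
end

section
/- Let d ≥ 2 be an integer and wᵢ = d^{n−i} for i ∈ {1,…,n}. Let q ∈ (0, w(N)], and write ⌈q⌉ in base d as (t₁…tₙ)_d. If all digits tᵢ ∈ {0,1}, then A(q) = {i : tᵢ = 1}. Otherwise, let ℓ be minimal with t_ℓ > 1; then there exists a maximal k < ℓ with t_k = 0, and A(q) = {i < k : tᵢ = 1} ∪ {k}. -/
/-!
For `d ≥ 2` the weights `d ^ (n - 1 - i)` compare subsets exactly as the binary weights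
`2 ^ (n - 1 - i)` do (both orders are colex on the exponent sets), so the `β`-predecessor
condition says that `A` is the lightest set whose weight is at least `m = ⌈q⌉`. If all base-`d`
digits of `m` are `0` or `1`, `m` is itself the weight of the set of its `1`-digits. Otherwise,
let `k` be the last `0`-digit before the first digit `≥ 2` and `P` the set of `1`-digits before
`k`: then `weight (P ∪ Ioi k) < m ≤ weight (insert k P)`, and these two sets are
`β`-consecutive.
-/

open Finset

namespace SuperincreasingWeights

variable {n : ℕ}

def weight (d : ℕ) (S : Finset (Fin n)) : ℕ := ∑ i ∈ S, d ^ (n - 1 - (i : ℕ))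

def ofDigitsOn (d : ℕ) (t : Fin n → ℕ) (S : Finset (Fin n)) : ℕ :=
  ∑ i ∈ S, t i * d ^ (n - 1 - (i : ℕ))

def revValEmbedding : Fin n ↪ ℕ := Fin.revPerm.toEmbedding.trans Fin.valEmbedding

lemma revValEmbedding_apply (i : Fin n) : revValEmbedding i = n - 1 - (i : ℕ) := by
  simp only [revValEmbedding, Function.Embedding.trans_apply, Equiv.coe_toEmbedding,
    Fin.revPerm_apply, Fin.valEmbedding_apply, Fin.val_rev]
  omega

lemma weight_eq_geomSum (d : ℕ) (S : Finset (Fin n)) :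
    weight d S = ∑ k ∈ S.map revValEmbedding, d ^ k := by
  simp [weight, revValEmbedding_apply]

lemma cast_weight {R : Type*} [CommSemiring R] (d : ℕ) (S : Finset (Fin n)) :
    (weight d S : R) = ∑ i ∈ S, (d : R) ^ (n - 1 - (i : ℕ)) := by
  push_cast [weight]; rfl

lemma weight_lt_weight_iff {c d : ℕ} (hc : 2 ≤ c) (hd : 2 ≤ d) {S T : Finset (Fin n)} :
    weight c S < weight c T ↔ weight d S < weight d T := by
  simp only [weight_eq_geomSum, geomSum_lt_geomSum_iff_toColex_lt_toColex hc,
    geomSum_lt_geomSum_iff_toColex_lt_toColex hd]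

lemma weight_le_weight_iff {c d : ℕ} (hc : 2 ≤ c) (hd : 2 ≤ d) {S T : Finset (Fin n)} :
    weight c S ≤ weight c T ↔ weight d S ≤ weight d T := by
  simpa only [not_lt] using (weight_lt_weight_iff hc hd).not

lemma weight_injective {d : ℕ} (hd : 2 ≤ d) : Function.Injective (weight (n := n) d) := by
  intro S T h
  simp only [weight_eq_geomSum] at h
  exact map_injective _ (geomSum_injective hd h)

lemma weight_lt_pow {d : ℕ} (hd : 2 ≤ d) (S : Finset (Fin n)) : weight d S < d ^ n := by
  rw [weight_eq_geomSum]
  refine Nat.geomSum_lt hd fun k hk ↦ ?_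
  obtain ⟨i, -, rfl⟩ := mem_map.1 hk
  rw [revValEmbedding_apply]
  omega

lemma map_Ioi_revValEmbedding (k : Fin n) :
    (Ioi k).map revValEmbedding = range (n - 1 - k) := by
  ext j
  simp only [mem_map, mem_Ioi, mem_range, revValEmbedding_apply]
  constructor
  · rintro ⟨i, hki, rfl⟩
    have : (k : ℕ) < i := hki
    omega
  · intro hj
    exact ⟨⟨n - 1 - j, by omega⟩, Fin.lt_def.2 (by simp only; omega), by simp only; omega⟩

lemma map_univ_revValEmbedding : (univ : Finset (Fin n)).map revValEmbedding = range n := by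
  ext j
  simp only [mem_map, mem_univ, true_and, mem_range, revValEmbedding_apply]
  constructor
  · rintro ⟨i, rfl⟩
    omega
  · intro hj
    exact ⟨⟨n - 1 - j, by omega⟩, by simp only; omega⟩

lemma pred_mul_weight_Ioi_add_one {d : ℕ} (hd : 1 ≤ d) (k : Fin n) :
    (d - 1) * weight d (Ioi k) + 1 = d ^ (n - 1 - (k : ℕ)) := by
  have := geom_sum_mul_add (d - 1) (n - 1 - k)
  rw [Nat.sub_add_cancel hd] at this
  rw [weight_eq_geomSum, map_Ioi_revValEmbedding, mul_comm, this]

lemma weight_Ioi_lt {d : ℕ} (hd : 2 ≤ d) (k : Fin n) :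
    weight d (Ioi k) < d ^ (n - 1 - (k : ℕ)) := by
  have := pred_mul_weight_Ioi_add_one (by omega : 1 ≤ d) k
  have : weight d (Ioi k) ≤ (d - 1) * weight d (Ioi k) := Nat.le_mul_of_pos_left _ (by omega)
  omega

def IsLightestReaching (d m : ℕ) (A : Finset (Fin n)) : Prop :=
  m ≤ weight d A ∧ ∀ C : Finset (Fin n), m ≤ weight d C → weight d A ≤ weight d C

lemma IsLightestReaching.unique {d m : ℕ} (hd : 2 ≤ d) {A B : Finset (Fin n)}
    (hA : IsLightestReaching d m A) (hB : IsLightestReaching d m B) : A = B :=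
  weight_injective hd (le_antisymm (hA.2 B hB.1) (hB.2 A hA.1))

lemma isLightestReaching_of_succ {d m : ℕ} (hd : 2 ≤ d) {A A' : Finset (Fin n)}
    (hsucc : weight 2 A' + 1 = weight 2 A) (hlo : weight d A' < m) (hhi : m ≤ weight d A) :
    IsLightestReaching d m A := by
  refine ⟨hhi, fun C hC ↦ not_lt.1 fun hCA ↦ ?_⟩
  have h2 : weight 2 C ≤ weight 2 A' := by
    have := (weight_lt_weight_iff hd le_rfl).1 hCA
    omega
  have := (weight_le_weight_iff le_rfl hd).1 h2
  omega

lemma isLightestReaching_weight (d : ℕ) (A : Finset (Fin n)) :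
    IsLightestReaching d (weight d A) A :=
  ⟨le_rfl, fun _ h ↦ h⟩

lemma ofDigitsOn_eq_weight_filter {d : ℕ} {t : Fin n → ℕ} {S : Finset (Fin n)}
    (h01 : ∀ i ∈ S, t i ≤ 1) : ofDigitsOn d t S = weight d (S.filter (t · = 1)) := by
  rw [weight, sum_filter, ofDigitsOn]
  refine sum_congr rfl fun i hi ↦ ?_
  rcases Nat.le_one_iff_eq_zero_or_eq_one.1 (h01 i hi) with h | h <;> simp [h]

lemma ofDigitsOn_univ_split (d : ℕ) (t : Fin n → ℕ) (k : Fin n) :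
    ofDigitsOn d t univ =
      ofDigitsOn d t (Iio k) + t k * d ^ (n - 1 - (k : ℕ)) + ofDigitsOn d t (Ioi k) := by
  rw [ofDigitsOn, ofDigitsOn, ofDigitsOn, sum_Iio_add_eq_sum_Iic,
    ← sum_filter_add_sum_filter_not univ (· ≤ k)]
  simp only [not_le, filter_ge_eq_Iic, filter_lt_eq_Ioi]

lemma ofDigitsOn_Ioi_lt {d : ℕ} {t : Fin n → ℕ} (ht : ∀ i, t i < d) (k : Fin n) :
    ofDigitsOn d t (Ioi k) < d ^ (n - 1 - (k : ℕ)) := by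
  have hle : ofDigitsOn d t (Ioi k) ≤ (d - 1) * weight d (Ioi k) := by
    rw [ofDigitsOn, weight, mul_sum]
    exact sum_le_sum fun i _ ↦ Nat.mul_le_mul_right _ (Nat.le_sub_one_of_lt (ht i))
  have := pred_mul_weight_Ioi_add_one (Nat.one_le_of_lt (ht k)) k
  omega

lemma weight_lt_ofDigitsOn {d : ℕ} (hd : 2 ≤ d) {t : Fin n → ℕ} {S : Finset (Fin n)}
    {l : Fin n} (hl : l ∈ S) (hIoi : Ioi l ⊆ S) (hpos : ∀ i ∈ S, i < l → 1 ≤ t i)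
    (htl : 2 ≤ t l) :
    weight d S < ofDigitsOn d t S := by
  -- The surplus `d ^ (n - 1 - l)` from `t l ≥ 2` outweighs the whole tail after `l`.
  set L := S \ Ioi l
  have hsplit (f : Fin n → ℕ) : ∑ i ∈ S, f i = ∑ i ∈ L, f i + ∑ i ∈ Ioi l, f i :=
    (sum_sdiff hIoi).symm
  have hL : ∑ i ∈ L, (1 + if i = l then 1 else 0) * d ^ (n - 1 - (i : ℕ)) ≤
      ∑ i ∈ L, t i * d ^ (n - 1 - (i : ℕ)) := by
    refine sum_le_sum fun i hi ↦ Nat.mul_le_mul_right _ ?_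
    obtain ⟨hiS, hil⟩ := mem_sdiff.1 hi
    rcases lt_trichotomy i l with h | rfl | h
    · simpa [h.ne] using hpos i hiS h
    · simpa using htl
    · exact absurd (mem_Ioi.2 h) hil
  have hlL : l ∈ L := mem_sdiff.2 ⟨hl, by simp⟩
  simp only [add_mul, one_mul, ite_mul, zero_mul, sum_add_distrib, sum_ite_eq', if_pos hlL] at hL
  have := weight_Ioi_lt hd l
  rw [weight, ofDigitsOn, hsplit, hsplit]
  rw [weight] at this
  omega

lemma sum_range_digit_mul_pow (d m N : ℕ) :
    ∑ j ∈ range N, m / d ^ j % d * d ^ j = m % d ^ N := by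
  induction N with
  | zero => simp [Nat.mod_one]
  | succ N ih =>
    rw [sum_range_succ, ih, pow_succ, Nat.mod_mul]
    ring

lemma ofDigitsOn_univ_eq {d m : ℕ} {t : Fin n → ℕ} (hm : m < d ^ n)
    (ht : ∀ i, t i = m / d ^ (n - 1 - (i : ℕ)) % d) : ofDigitsOn d t univ = m := by
  have : ofDigitsOn d t univ =
      ∑ j ∈ (univ : Finset (Fin n)).map revValEmbedding, m / d ^ j % d * d ^ j := by
    simp [ofDigitsOn, ht, revValEmbedding_apply]
  rw [this, map_univ_revValEmbedding, sum_range_digit_mul_pow, Nat.mod_eq_of_lt hm]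

lemma isLightestReaching_filter_eq_one {d : ℕ} {t : Fin n → ℕ} (h01 : ∀ i, t i ≤ 1) :
    IsLightestReaching d (ofDigitsOn d t univ) (univ.filter (t · = 1)) := by
  rw [ofDigitsOn_eq_weight_filter fun i _ ↦ h01 i]
  exact isLightestReaching_weight d _

lemma exists_greatest_lt_digit_eq_zero {d : ℕ} (hd : 2 ≤ d) {t : Fin n → ℕ} {l : Fin n}
    (hm : ofDigitsOn d t univ ≤ weight d (univ : Finset (Fin n))) (htl : 2 ≤ t l) :
    ∃ k, k < l ∧ t k = 0 ∧ ∀ k', k' < l → t k' = 0 → k' ≤ k := by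
  obtain ⟨k₀, hk₀l, htk₀⟩ : ∃ k < l, t k = 0 := by
    by_contra! h
    have := weight_lt_ofDigitsOn hd (mem_univ l) (subset_univ _)
      (fun i _ hi ↦ Nat.one_le_iff_ne_zero.2 (h i hi)) htl
    omega
  obtain ⟨k, hk, hmax⟩ := (univ.filter fun i ↦ i < l ∧ t i = 0).exists_max_image id
    ⟨k₀, by simp [hk₀l, htk₀]⟩
  simp only [mem_filter, mem_univ, true_and, id] at hk hmax
  exact ⟨k, hk.1, hk.2, fun k' hk'l htk' ↦ hmax k' ⟨hk'l, htk'⟩⟩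

lemma isLightestReaching_insert {d : ℕ} (hd : 2 ≤ d) {t : Fin n → ℕ} (ht : ∀ i, t i < d)
    {k l : Fin n} (hkl : k < l) (htk : t k = 0) (htl : 2 ≤ t l) (hlow : ∀ i < k, t i ≤ 1)
    (hmid : ∀ i, k < i → i < l → 1 ≤ t i) :
    IsLightestReaching d (ofDigitsOn d t univ)
      (insert k (univ.filter fun i ↦ i < k ∧ t i = 1)) := by
  set P := univ.filter fun i ↦ i < k ∧ t i = 1
  have hP : ofDigitsOn d t (Iio k) = weight d P := by
    rw [ofDigitsOn_eq_weight_filter fun i hi ↦ hlow i (mem_Iio.1 hi)]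
    congr 1
    ext i
    simp [P]
  have hweight_insert (c : ℕ) : weight c (insert k P) = weight c P + c ^ (n - 1 - (k : ℕ)) := by
    rw [weight, sum_insert (by simp [P]), add_comm]
    rfl
  have hweight_union (c : ℕ) : weight c (P ∪ Ioi k) = weight c P + weight c (Ioi k) :=
    sum_union <| disjoint_left.2 fun i hi hi' ↦ by
      simp only [P, mem_filter, mem_univ, true_and] at hi
      exact lt_asymm hi.1 (mem_Ioi.1 hi')
  have hm := ofDigitsOn_univ_split d t k
  rw [htk, zero_mul, add_zero, hP] at hm
  refine isLightestReaching_of_succ hd (A' := P ∪ Ioi k) ?_ ?_ ?_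
  · have := pred_mul_weight_Ioi_add_one (d := 2) one_le_two k
    rw [hweight_union, hweight_insert]
    omega
  · have := weight_lt_ofDigitsOn hd (mem_Ioi.2 hkl) (Ioi_subset_Ioi hkl.le)
      (fun i hi hil ↦ hmid i (mem_Ioi.1 hi) hil) htl
    rw [hm, hweight_union]
    omega
  · have := ofDigitsOn_Ioi_lt ht k
    rw [hm, hweight_insert]
    omega

end SuperincreasingWeights

open SuperincreasingWeights

theorem stmt16_general (n d : ℕ) (hd : 2 ≤ d) (q : ℝ)
    (A Pm : Finset (Fin n))
    (hβ : (∑ i ∈ Pm, 2^(n - 1 - (i:ℕ)) : ℕ) + 1 = ∑ i ∈ A, 2^(n - 1 - (i:ℕ)))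
    (hlo : (∑ i ∈ Pm, (d:ℝ)^(n - 1 - (i:ℕ))) < q)
    (hhi : q ≤ ∑ i ∈ A, (d:ℝ)^(n - 1 - (i:ℕ)))
    (t : Fin n → ℕ) (ht : ∀ i : Fin n, t i = ((⌈q⌉.toNat) / d^(n - 1 - (i:ℕ))) % d) :
    ((∀ i, t i ≤ 1) → A = Finset.univ.filter (fun i => t i = 1)) ∧
    (∀ l : Fin n, 1 < t l → (∀ i, i < l → t i ≤ 1) →
      ∃ k : Fin n, k < l ∧ t k = 0 ∧ (∀ k', k' < l → t k' = 0 → k' ≤ k) ∧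
        A = insert k (Finset.univ.filter (fun i => i < k ∧ t i = 1))) := by
  rw [Int.ceil_toNat] at ht
  have hA : IsLightestReaching d ⌈q⌉₊ A := isLightestReaching_of_succ hd hβ
    (Nat.lt_ceil.2 (by rwa [cast_weight])) (Nat.ceil_le.2 (by rwa [cast_weight]))
  rw [← ofDigitsOn_univ_eq (hA.1.trans_lt (weight_lt_pow hd A)) ht] at hA
  have htd (i : Fin n) : t i < d := (ht i).symm ▸ Nat.mod_lt _ (by omega)
  refine ⟨fun h01 ↦ hA.unique hd (isLightestReaching_filter_eq_one h01), fun l htl hle ↦ ?_⟩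
  obtain ⟨k, hkl, htk, hmax⟩ :=
    exists_greatest_lt_digit_eq_zero hd (hA.1.trans (sum_le_sum_of_subset (subset_univ A))) htl
  refine ⟨k, hkl, htk, hmax, hA.unique hd (isLightestReaching_insert hd htd hkl htk htl
    (fun i hi ↦ hle i (hi.trans hkl)) fun i hki hil ↦ ?_)⟩
  exact Nat.one_le_iff_ne_zero.2 fun h0 ↦ not_lt.2 (hmax i hil h0) hki

/-- Finding `A(q)` when the weights are `wᵢ = d^(n-i)` (agent `i : Fin n` is the
paper's agent `i+1`, with weight `d^(n-1-i)`). `t i` is the `i`-th base-`d` digit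
of `⌈q⌉` (most significant first), and `A` is the unique set with
`q ∈ (w(A⁻), w(A)]`, given via its `β`-predecessor `Pm`. -/
theorem stmt16 (n d : ℕ) (hd : 2 ≤ d) (q : ℝ)
    (hq1 : 0 < q) (hq2 : q ≤ ∑ i : Fin n, (d:ℝ)^(n - 1 - (i:ℕ)))
    (A Pm : Finset (Fin n))
    (hβ : (∑ i ∈ Pm, 2^(n - 1 - (i:ℕ)) : ℕ) + 1 = ∑ i ∈ A, 2^(n - 1 - (i:ℕ)))
    (hlo : (∑ i ∈ Pm, (d:ℝ)^(n - 1 - (i:ℕ))) < q)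
    (hhi : q ≤ ∑ i ∈ A, (d:ℝ)^(n - 1 - (i:ℕ)))
    (t : Fin n → ℕ) (ht : ∀ i : Fin n, t i = ((⌈q⌉.toNat) / d^(n - 1 - (i:ℕ))) % d) :
    ((∀ i, t i ≤ 1) → A = Finset.univ.filter (fun i => t i = 1)) ∧
    (∀ l : Fin n, 1 < t l → (∀ i, i < l → t i ≤ 1) →
      ∃ k : Fin n, k < l ∧ t k = 0 ∧ (∀ k', k' < l → t k' = 0 → k' ≤ k) ∧
        A = insert k (Finset.univ.filter (fun i => i < k ∧ t i = 1))) :=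
  stmt16_general n d hd q A Pm hβ hlo hhi t ht
end

section
/- Let (wᵢ)_{i≥1} be an infinite super-increasing sequence (wᵢ ≥ Σ_{j>i} wⱼ) with sum w(∞). For every q ∈ (0, w(∞)), there exists a non-empty subset P of the positive integers such that either q = w(P), or P = {a₀,…,a_r} is finite and q ∈ (w(P⁻), w(P)], where P⁻ = {a₀,…,a_{r−1}} ∪ {a_r+1, a_r+2, …}. -/
/-!
Expand `q` greedily: run through the indices in order and put `i` into `P` exactly when the sum
of `w` over the indices taken so far plus the whole tail `∑_{j > i} w j` still falls short of `q`.
The invariant `q ≤ (greedy sum before i) + ∑_{j ≥ i} w j` passes to the limit and gives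
`q ≤ w(P)`. If `P` is infinite, the greedy sum before every index of `P` is `< q`, so
`w(P) ≤ q`. If `P` is finite with maximum `a`, then `w(P⁻)` is exactly the quantity that was
`< q` when `a` was taken.
-/

open Filter Topology Finset

namespace GreedyExpansion

variable {w : ℕ → ℝ} {q : ℝ}

noncomputable def tail (w : ℕ → ℝ) (i : ℕ) : ℝ := ∑' j, w (j + i)

lemma tail_zero : tail w 0 = ∑' i, w i := rfl

lemma sum_range_add_tail (hsum : Summable w) (i : ℕ) :
    ∑ j ∈ range i, w j + tail w i = ∑' j, w j :=
  hsum.sum_add_tsum_nat_add i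

lemma tail_eq_add_tail_succ (hsum : Summable w) (i : ℕ) : tail w i = w i + tail w (i + 1) := by
  have h₀ := sum_range_add_tail hsum i
  have h₁ := sum_range_add_tail hsum (i + 1)
  rw [sum_range_succ] at h₁
  linarith

lemma tendsto_tail (w : ℕ → ℝ) : Tendsto (tail w) atTop (𝓝 0) := tendsto_sum_nat_add w

lemma tail_nonneg (hw : ∀ i, 0 ≤ w i) (i : ℕ) : 0 ≤ tail w i := tsum_nonneg fun _ => hw _

open Classical in
noncomputable def greedySum (w : ℕ → ℝ) (q : ℝ) : ℕ → ℝ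
  | 0 => 0
  | i + 1 => greedySum w q i + if greedySum w q i + tail w (i + 1) < q then w i else 0

def greedySet (w : ℕ → ℝ) (q : ℝ) : Set ℕ := {i | greedySum w q i + tail w (i + 1) < q}

lemma tsum_indicator_diff_union_Ioi (hsum : Summable w) (P : Set ℕ) (a : ℕ) :
    ∑' i, ((P \ {a}) ∪ {b | a < b}).indicator w i
      = ∑ j ∈ range a, P.indicator w j + tail w (a + 1) := by
  set Q := (P \ {a}) ∪ {b | a < b}
  have hbelow : ∀ j < a, Q.indicator w j = P.indicator w j := fun j hj => by
    have : j ∈ Q ↔ j ∈ P := by simp [Q, hj.ne, hj.not_gt]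
    by_cases hjP : j ∈ P
    · rw [Set.indicator_of_mem hjP, Set.indicator_of_mem (this.mpr hjP)]
    · rw [Set.indicator_of_notMem hjP, Set.indicator_of_notMem (mt this.mp hjP)]
  have hat : Q.indicator w a = 0 := Set.indicator_of_notMem (by simp [Q]) w
  have habove : ∀ i, Q.indicator w (i + (a + 1)) = w (i + (a + 1)) := fun i =>
    Set.indicator_of_mem (show i + (a + 1) ∈ Q from Or.inr (by show a < _; omega)) w
  rw [← (hsum.indicator Q).sum_add_tsum_nat_add (a + 1), sum_range_succ, hat, add_zero,
    sum_congr rfl fun j hj => hbelow j (mem_range.mp hj), tsum_congr habove, tail]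

lemma greedySum_succ (i : ℕ) :
    greedySum w q (i + 1) = greedySum w q i + (greedySet w q).indicator w i :=
  rfl

lemma greedySum_eq_sum_range (n : ℕ) :
    greedySum w q n = ∑ j ∈ range n, (greedySet w q).indicator w j := by
  induction n with
  | zero => rfl
  | succ n ih => rw [greedySum_succ, ih, sum_range_succ]

lemma tendsto_greedySum (hsum : Summable w) :
    Tendsto (greedySum w q) atTop (𝓝 (∑' i, (greedySet w q).indicator w i)) := by
  simpa only [← greedySum_eq_sum_range] using
    (hsum.indicator (greedySet w q)).hasSum.tendsto_sum_nat

lemma monotone_greedySum (hw : ∀ i, 0 ≤ w i) : Monotone (greedySum w q) :=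
  monotone_nat_of_le_succ fun i => by
    rw [greedySum_succ]
    exact le_add_of_nonneg_right (Set.indicator_nonneg (fun j _ => hw j) i)

lemma le_greedySum_add_tail (hsum : Summable w) (hq : q ≤ ∑' i, w i) (i : ℕ) :
    q ≤ greedySum w q i + tail w i := by
  induction i with
  | zero => simpa [greedySum, tail_zero] using hq
  | succ i ih =>
    rw [greedySum_succ]
    by_cases hi : i ∈ greedySet w q
    · rw [Set.indicator_of_mem hi]
      linarith [tail_eq_add_tail_succ hsum i]
    · rw [Set.indicator_of_notMem hi, add_zero]
      exact not_lt.mp hi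

lemma le_tsum_indicator_greedySet (hsum : Summable w) (hq : q ≤ ∑' i, w i) :
    q ≤ ∑' i, (greedySet w q).indicator w i := by
  have h := (tendsto_greedySum (q := q) hsum).add (tendsto_tail w)
  rw [add_zero] at h
  exact ge_of_tendsto' h (le_greedySum_add_tail hsum hq)

lemma greedySet_nonempty (hsum : Summable w) (hq₀ : 0 < q) (hq : q ≤ ∑' i, w i) :
    (greedySet w q).Nonempty := by
  rw [Set.nonempty_iff_ne_empty]
  intro hempty
  have h := le_tsum_indicator_greedySet hsum hq
  simp only [hempty, Set.indicator_empty, tsum_zero] at h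
  linarith

lemma greedySum_lt_of_mem (hw : ∀ i, 0 ≤ w i) {i : ℕ} (hi : i ∈ greedySet w q) :
    greedySum w q i < q :=
  lt_of_le_of_lt (le_add_of_nonneg_right (tail_nonneg hw (i + 1))) hi

lemma tsum_indicator_greedySet_of_infinite (hw : ∀ i, 0 ≤ w i) (hsum : Summable w)
    (hq : q ≤ ∑' i, w i) (hinf : (greedySet w q).Infinite) :
    ∑' i, (greedySet w q).indicator w i = q := by
  refine le_antisymm (le_of_tendsto' (tendsto_greedySum hsum) fun n => ?_)
    (le_tsum_indicator_greedySet hsum hq)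
  obtain ⟨i, hi, hni⟩ := hinf.exists_gt n
  exact (monotone_greedySum hw hni.le).trans (greedySum_lt_of_mem hw hi).le

end GreedyExpansion

theorem stmt18_general (w : ℕ → ℝ) (hpos : ∀ i, 0 < w i) (hsum : Summable w)
    (q : ℝ) (hq1 : 0 < q) (hq2 : q < ∑' i : ℕ, w i) :
    ∃ P : Set ℕ, P.Nonempty ∧
      (q = ∑' i : ℕ, P.indicator w i ∨
        ∃ a ∈ P, (∀ b ∈ P, b ≤ a) ∧ P.Finite ∧
          (∑' i : ℕ, ((P \ {a}) ∪ {b | a < b}).indicator w i) < q ∧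
          q ≤ ∑' i : ℕ, P.indicator w i) := by
  open GreedyExpansion in
  have hne := greedySet_nonempty hsum hq1 hq2.le
  refine ⟨greedySet w q, hne, ?_⟩
  by_cases hfin : (greedySet w q).Finite
  · have hmax := Nat.sSup_mem hne hfin.bddAbove
    refine .inr ⟨_, hmax, fun b hb => le_csSup hfin.bddAbove hb, hfin, ?_,
      le_tsum_indicator_greedySet hsum hq2.le⟩
    rwa [tsum_indicator_diff_union_Ioi hsum, ← greedySum_eq_sum_range]
  · exact .inl (tsum_indicator_greedySet_of_infinite (fun i => (hpos i).le) hsum hq2.le hfin).symm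

/-- For an infinite super-increasing sequence with sum `w(∞)` and any
`q ∈ (0, w(∞))`, there is a nonempty set `P` of indices with either `q = w(P)`,
or `P` finite (with maximum `a`) and `q ∈ (w(P⁻), w(P)]`, where
`P⁻ = (P \ {a}) ∪ {b | b > a}`. -/
theorem stmt18 (w : ℕ → ℝ) (hpos : ∀ i, 0 < w i) (hsum : Summable w)
    (hsi : ∀ i : ℕ, (∑' j : ℕ, w (i + 1 + j)) ≤ w i)
    (q : ℝ) (hq1 : 0 < q) (hq2 : q < ∑' i : ℕ, w i) :
    ∃ P : Set ℕ, P.Nonempty ∧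
      (q = ∑' i : ℕ, P.indicator w i ∨
        ∃ a ∈ P, (∀ b ∈ P, b ≤ a) ∧ P.Finite ∧
          (∑' i : ℕ, ((P \ {a}) ∪ {b | a < b}).indicator w i) < q ∧
          q ≤ ∑' i : ℕ, P.indicator w i) :=
  stmt18_general w hpos hsum q hq1 hq2
end

section
/- Let Algorithm Find-Set process a super-increasing weight vector w₁ > ⋯ > wₙ > 0 and quota q ∈ (0, w(N)] as follows: starting with A = ∅, for i = 1 to n, add i to A if q > w(A ∪ {i+1,…,n}). Then the returned set A equals A(q), the unique non-empty subset P with q ∈ (w(P⁻), w(P)]. -/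
/-- The greedy Find-Set algorithm: starting from `∅`, it iterates over agents
`i = 1, …, n` in order and adds `i` to `A` whenever `q > w(A ∪ {i+1,…,n})`. -/
noncomputable def findSet (n : ℕ) (w : Fin n → ℝ) (q : ℝ) : Finset (Fin n) :=
  (List.finRange n).foldl
    (fun A i =>
      if (∑ j ∈ A ∪ Finset.univ.filter (fun j => i < j), w j) < q then insert i A else A)
    ∅

/-!
After its first `k` rounds the loop keeps the invariant `q ≤ w(A ∪ {k, …, n-1})`: declining
agent `k` means `q ≤ w(A ∪ {k+1, …, n-1})`, and accepting it leaves `A ∪ {k, …, n-1}` unchanged.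
At the end this reads `q ≤ w(A)`, so `A ≠ ∅` as `q > 0`. If `i` is the last agent accepted, then
`A ∪ {i+1, …, n-1}` was too light, and this set is the `β`-predecessor of the final `A`, because
all earlier members of `A` precede `i`.
-/

open Finset

namespace FindSet

variable {n : ℕ}

/-- The paper's `β`, with agents numbered from `0`. -/
def beta (A : Finset (Fin n)) : ℕ := ∑ i ∈ A, 2 ^ (n - 1 - (i : ℕ))

lemma beta_Ioi_add_one (i : Fin n) : beta (Ioi i) + 1 = 2 ^ (n - 1 - (i : ℕ)) := by
  have h : beta (Ioi i) = ∑ k ∈ range (n - 1 - i), 2 ^ k := by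
    have hrev : ∀ j : Fin n, n - 1 - (j : ℕ) = j.rev := fun j => by rw [Fin.val_rev]; omega
    simp_rw [beta, hrev]
    rw [← sum_image (g := Fin.rev) (f := fun k : Fin n => 2 ^ (k : ℕ)) Fin.rev_injective.injOn,
      Fin.finsetImage_rev_Ioi, ← Nat.Iio_eq_range, ← Fin.map_valEmbedding_Iio, sum_map]
    rfl
  rw [h, Nat.geomSum_eq le_rfl]
  have := Nat.one_le_two_pow (n := n - 1 - i)
  omega

lemma beta_union_Ioi_add_one {A : Finset (Fin n)} {i : Fin n} (hA : ∀ a ∈ A, a < i) :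
    beta (A ∪ Ioi i) + 1 = beta (insert i A) := by
  have hdisj : Disjoint A (Ioi i) :=
    disjoint_left.mpr fun a ha hai => (mem_Ioi.mp hai).not_gt (hA a ha)
  have hi : i ∉ A := fun hi => lt_irrefl i (hA i hi)
  have hIoi := beta_Ioi_add_one i
  simp only [beta] at hIoi ⊢
  rw [sum_union hdisj, sum_insert hi]
  omega

variable (w : Fin n → ℝ) (q : ℝ)

noncomputable def findSetStep (A : Finset (Fin n)) (i : Fin n) : Finset (Fin n) :=
  if ∑ j ∈ A ∪ Ioi i, w j < q then insert i A else A

noncomputable def stage (k : ℕ) : Finset (Fin n) :=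
  ((List.finRange n).take k).foldl (findSetStep w q) ∅

lemma stage_succ (i : Fin n) : stage w q (i + 1) = findSetStep w q (stage w q i) i := by
  have htake : (List.finRange n).take (i + 1) = (List.finRange n).take i ++ [i] := by
    rw [List.take_add_one]
    simp [i.isLt]
  rw [stage, htake, List.foldl_concat, stage]

lemma stage_eq_findSet : stage w q n = findSet n w q := by
  simp only [stage, findSet, filter_lt_eq_Ioi]
  rw [List.take_of_length_le (List.length_finRange).le]
  rfl

def agentsFrom (k : ℕ) : Finset (Fin n) := univ.filter fun j => k ≤ (j : ℕ)

lemma agentsFrom_val_succ (i : Fin n) : agentsFrom (i + 1) = Ioi i := by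
  ext j; simp only [agentsFrom, mem_filter, mem_univ, true_and, mem_Ioi, Fin.lt_def]; omega

lemma agentsFrom_val (i : Fin n) : agentsFrom i = Ici i := by
  ext j; simp only [agentsFrom, mem_filter, mem_univ, true_and, mem_Ici, Fin.le_def]

lemma agentsFrom_self : agentsFrom n = (∅ : Finset (Fin n)) := by
  ext j; simp [agentsFrom]

structure Invariant (k : ℕ) (A : Finset (Fin n)) : Prop where
  lt : ∀ a ∈ A, (a : ℕ) < k
  le_weight : q ≤ ∑ j ∈ A ∪ agentsFrom k, w j
  exists_pred : A.Nonempty → ∃ P, beta P + 1 = beta A ∧ ∑ j ∈ P, w j < q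

lemma invariant_zero (hq : q ≤ ∑ i, w i) : Invariant w q 0 ∅ where
  lt := by simp
  le_weight := by simpa [agentsFrom] using hq
  exists_pred := by simp

lemma Invariant.step {i : Fin n} {A : Finset (Fin n)} (h : Invariant w q i A) :
    Invariant w q (i + 1) (findSetStep w q A i) := by
  have hA : ∀ a ∈ A, a < i := fun a ha => Fin.lt_def.mpr (h.lt a ha)
  unfold findSetStep
  split_ifs with hlight
  · refine ⟨?_, ?_, fun _ => ⟨A ∪ Ioi i, beta_union_Ioi_add_one hA, hlight⟩⟩
    · intro a ha
      rcases mem_insert.mp ha with rfl | ha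
      · exact Nat.lt_succ_self a
      · exact Nat.lt_succ_of_lt (h.lt a ha)
    · rw [agentsFrom_val_succ, insert_union, ← union_insert, Ioi_insert, ← agentsFrom_val]
      exact h.le_weight
  · refine ⟨fun a ha => Nat.lt_succ_of_lt (h.lt a ha), ?_, h.exists_pred⟩
    rw [agentsFrom_val_succ]
    exact not_lt.mp hlight

lemma invariant_stage (hq : q ≤ ∑ i, w i) {k : ℕ} (hk : k ≤ n) : Invariant w q k (stage w q k) := by
  induction k with
  | zero => exact invariant_zero w q hq
  | succ k ih =>
    rw [stage_succ w q ⟨k, hk⟩]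
    exact (ih (Nat.le_of_succ_le hk)).step (i := ⟨k, hk⟩) w q

end FindSet

open FindSet

theorem stmt19_general (n : ℕ) (w : Fin n → ℝ)
    (q : ℝ) (hq1 : 0 < q) (hq2 : q ≤ ∑ i : Fin n, w i) :
    (findSet n w q).Nonempty ∧
    ∃ Pm : Finset (Fin n),
      (∑ i ∈ Pm, 2^(n - 1 - (i:ℕ)) : ℕ) + 1 = (∑ i ∈ findSet n w q, 2^(n - 1 - (i:ℕ))) ∧
      (∑ i ∈ Pm, w i) < q ∧ q ≤ ∑ i ∈ findSet n w q, w i := by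
  have h := invariant_stage w q hq2 le_rfl
  rw [stage_eq_findSet] at h
  have hle : q ≤ ∑ i ∈ findSet n w q, w i := by simpa [agentsFrom_self] using h.le_weight
  have hne : (findSet n w q).Nonempty := nonempty_of_sum_ne_zero (hq1.trans_le hle).ne'
  obtain ⟨P, hβ, hP⟩ := h.exists_pred hne
  exact ⟨hne, P, hβ, hP, hle⟩

/-- Correctness of the greedy algorithm: for super-increasing weights and
`q ∈ (0, w(N)]`, the returned set `A` equals `A(q)`, i.e. it is the (unique)
nonempty set satisfying `q ∈ (w(A⁻), w(A)]`, where `A⁻` is the `β`-predecessor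
of `A` (`β(A⁻) + 1 = β(A)` with `β(C) = ∑_{i ∈ C} 2^(n-i)`). -/
theorem stmt19 (n : ℕ) (w : Fin n → ℝ) (hpos : ∀ i, 0 < w i) (hdec : StrictAnti w)
    (hsi : ∀ i : Fin n, (∑ j ∈ Finset.univ.filter (fun j => i < j), w j) < w i)
    (q : ℝ) (hq1 : 0 < q) (hq2 : q ≤ ∑ i : Fin n, w i) :
    (findSet n w q).Nonempty ∧
    ∃ Pm : Finset (Fin n),
      (∑ i ∈ Pm, 2^(n - 1 - (i:ℕ)) : ℕ) + 1 = (∑ i ∈ findSet n w q, 2^(n - 1 - (i:ℕ))) ∧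
      (∑ i ∈ Pm, w i) < q ∧ q ≤ ∑ i ∈ findSet n w q, w i :=
  stmt19_general n w q hq1 hq2
end
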